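/- Let P be a graded tree poset of height k (every maximal chain of P has exactly k elements and the Hasse diagram of P is a tree), and assume P is not a chain. Then there exists an element v ∈ P that is a leaf of the Hasse diagram, and an interval I of P with |I| ≤ k - 1 containing v, such that the Hasse diagram of P \ I is a tree and P \ I (with the induced order) is a graded poset of height k. -/

import Mathlib

/-!
Take a maximal leaf `v` of the Hasse diagram and walk down from it: as long as the current
element `x` has a single lower cover `t` whose only upper cover is `x`, continue with `t`. The
elements passed form a chain `Ici x` attached to the rest of the diagram only by the edge
`t ⋖ x`. If `t` has another upper cover `t'`, delete `Ici x = [x, v]`: the rest is still a tree,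
and a maximal chain of the rest that extends in `P` lies below `t`, hence could be extended by
`t'` within the rest; so it is a maximal chain of `P` and has `k` elements. As `Ici x ∪ {t}` is
a chain, `|[x, v]| ≤ k - 1`.
The walk can also end at a minimal element (then `P` is a chain) or at an element with two
lower covers, which has degree at least three. If no leaf, maximal or (dually) minimal, admits a
deletion, the leaves inject into the vertices of degree at least three, whereas a finite tree has
at least two more leaves than such vertices.
-/

/-- The Hasse diagram of a poset: vertices are the elements, with an edge between
`u` and `v` whenever one covers the other. -/
def hasse (P : Type*) [PartialOrder P] : SimpleGraph P where
  Adj u v := u ⋖ v ∨ v ⋖ u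
  symm := ⟨fun u v h => Or.symm h⟩
  loopless := ⟨by
    intro u h
    rcases h with h | h <;> exact absurd h.lt (lt_irrefl u)⟩

namespace SimpleGraph

variable {V : Type*} {G : SimpleGraph V}

theorem IsTree.card_filter_three_le_degree_add_two_le [Fintype V] [DecidableRel G.Adj]
    [Nontrivial V] (hG : G.IsTree) :
    (Finset.univ.filter fun v => 3 ≤ G.degree v).card + 2 ≤
      (Finset.univ.filter fun v => G.degree v = 1).card := by
  have hsum : ∑ v, G.degree v + 2 = 2 * Fintype.card V := by
    rw [sum_degrees_eq_twice_card_edges, ← hG.card_edgeFinset]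
    ring
  have hpointwise : ∀ v, 2 + (if 3 ≤ G.degree v then 1 else 0) ≤
      G.degree v + (if G.degree v = 1 then 1 else 0) := by
    intro v
    have := hG.connected.preconnected.degree_pos_of_nontrivial v
    split_ifs <;> omega
  have := Finset.sum_le_sum fun v (_ : v ∈ Finset.univ) => hpointwise v
  simp only [Finset.sum_add_distrib, Finset.sum_const, Finset.card_univ, smul_eq_mul,
    ← Finset.card_filter] at this
  omega

theorem ncard_neighborSet_eq_degree [Fintype V] [DecidableRel G.Adj] (v : V) :
    (G.neighborSet v).ncard = G.degree v := by
  rw [Set.ncard_eq_toFinset_card', Set.toFinset_card, card_neighborSet_eq_degree]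

variable {S : Set V} {t : V}

theorem Walk.mem_support_of_mem_of_notMem (hS : ∀ ⦃a c⦄, G.Adj a c → a ∉ S → c ∈ S → a = t)
    {c b : V} (q : G.Walk c b) (hc : c ∈ S) (hb : b ∉ S) : t ∈ q.support := by
  induction q with
  | nil => exact absurd hc hb
  | @cons c d b h q ih =>
    by_cases hd : d ∈ S
    · exact List.mem_cons_of_mem _ (ih hd hb)
    · exact List.mem_cons_of_mem _ (hS h.symm hd hc ▸ q.start_mem_support)

theorem Walk.IsPath.support_subset_compl (hS : ∀ ⦃a c⦄, G.Adj a c → a ∉ S → c ∈ S → a = t)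
    {a b : V} {p : G.Walk a b} (hp : p.IsPath) (ha : a ∉ S) (hb : b ∉ S) :
    ∀ x ∈ p.support, x ∈ Sᶜ := by
  induction p with
  | nil => simpa using ha
  | @cons a c b h q ih =>
    rw [Walk.cons_isPath_iff] at hp
    have hc : c ∉ S := fun hc =>
      hp.2 (hS h ha hc ▸ q.mem_support_of_mem_of_notMem hS hc hb)
    simpa [ha] using ih hp.1 hc hb

theorem IsTree.induce_compl (hG : G.IsTree) (ht : t ∉ S)
    (hS : ∀ ⦃a c⦄, G.Adj a c → a ∉ S → c ∈ S → a = t) : (G.induce Sᶜ).IsTree := by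
  refine ⟨(connected_iff _).2 ⟨fun a b => ?_, ⟨⟨t, ht⟩⟩⟩, hG.isAcyclic.induce _⟩
  obtain ⟨p, hp⟩ := hG.connected.exists_isPath a.1 b.1
  exact ⟨p.induce _ (hp.support_subset_compl hS a.2 b.2)⟩

end SimpleGraph

theorem hasse_orderDual (P : Type*) [PartialOrder P] : hasse Pᵒᵈ = hasse P := by
  ext a b
  exact or_comm.trans (or_congr ofDual_covBy_ofDual_iff.symm ofDual_covBy_ofDual_iff.symm)

section Poset

variable {P : Type*} [PartialOrder P]

theorem hasse_subtype_eq_induce {s : Set P} (hs : s.OrdConnected) :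
    hasse s = (hasse P).induce s := by
  have hcov : ∀ a b : s, (a : P) ⋖ b ↔ a ⋖ b := fun _ _ =>
    Set.OrdConnected.apply_covBy_apply_iff (OrderEmbedding.subtype (· ∈ s)) (by simpa using hs)
  ext a b
  exact (or_congr (hcov a b) (hcov b a)).symm

theorem neighborSet_hasse (y : P) :
    (hasse P).neighborSet y = {c | y ⋖ c} ∪ {w | w ⋖ y} := rfl

theorem IsChain.covBy_unique_left {s : Set P} (hs : IsChain (· ≤ ·) s) {a b c : P} (ha : a ∈ s)
    (hb : b ∈ s) (hac : a ⋖ c) (hbc : b ⋖ c) : a = b := by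
  obtain rfl | hab := eq_or_ne a b
  · rfl
  rcases hs ha hb hab with h | h
  · exact ((hac.eq_or_eq h hbc.le).resolve_right hbc.ne).symm
  · exact (hbc.eq_or_eq h hac.le).resolve_right hac.ne

theorem IsChain.covBy_unique_right {s : Set P} (hs : IsChain (· ≤ ·) s) {a b c : P} (ha : a ∈ s)
    (hb : b ∈ s) (hca : c ⋖ a) (hcb : c ⋖ b) : a = b :=
  IsChain.covBy_unique_left (P := Pᵒᵈ) hs.symm ha hb (toDual_covBy_toDual_iff.2 hca)
    (toDual_covBy_toDual_iff.2 hcb)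

theorem le_of_isChain_Ici {y v z : P} (h : IsChain (· ≤ ·) (Set.Ici y)) (hv : IsMax v)
    (hyv : y ≤ v) (hyz : y ≤ z) : z ≤ v :=
  (h.total hyz hyv).elim id fun hvz => hv hvz

theorem IsMaxChain.mem_of_forall_le {C : Set P} (hC : IsMaxChain (· ≤ ·) C) {a : P}
    (ha : ∀ c ∈ C, c ≤ a) : a ∈ C :=
  hC.2 (hC.1.insert fun c hc _ => Or.inr (ha c hc)) (Set.subset_insert a C) ▸ Set.mem_insert a C

theorem IsMaxChain.image_val {s : Set P} {D : Set s} (hD : IsMaxChain (· ≤ ·) D)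
    (hs : ∀ e ∉ s, ¬IsChain (· ≤ ·) (insert e (Subtype.val '' D))) :
    IsMaxChain (· ≤ ·) (Subtype.val '' D) := by
  refine ⟨hD.1.image_of_map_rel _ _ Subtype.val fun _ _ => id,
    fun E hE hDE => hDE.antisymm fun e he => ?_⟩
  by_cases hes : e ∈ s
  · have hchain : IsChain (· ≤ ·) (insert ⟨e, hes⟩ D) := hD.1.insert fun d hd hne =>
      hE he (hDE ⟨d, hd, rfl⟩) fun h => hne (Subtype.ext h)
    have hmem : (⟨e, hes⟩ : s) ∈ D :=
      (hD.2 hchain (Set.subset_insert _ _)).symm ▸ Set.mem_insert _ D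
    exact ⟨_, hmem, rfl⟩
  · exact absurd (hE.mono (Set.insert_subset he hDE)) (hs e hes)

variable [Finite P]

theorem ncard_neighborSet_hasse_le_two {y : P} (hup : IsChain (· ≤ ·) (Set.Ici y))
    (hdown : IsChain (· ≤ ·) (Set.Iic y)) : ((hasse P).neighborSet y).ncard ≤ 2 := by
  have hup' : {c | y ⋖ c}.ncard ≤ 1 := Set.ncard_le_one_iff_subsingleton.2
    fun _ ha _ hb => hup.covBy_unique_right (Set.mem_Ici.2 ha.le) (Set.mem_Ici.2 hb.le) ha hb
  have hdown' : {w | w ⋖ y}.ncard ≤ 1 := Set.ncard_le_one_iff_subsingleton.2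
    fun _ ha _ hb => hdown.covBy_unique_left (Set.mem_Iic.2 ha.le) (Set.mem_Iic.2 hb.le) ha hb
  rw [neighborSet_hasse]
  exact (Set.ncard_union_le _ _).trans (add_le_add hup' hdown')

theorem three_le_ncard_neighborSet_hasse {y a b c : P} (hab : a ≠ b) (ha : a ⋖ y)
    (hb : b ⋖ y) (hc : y ⋖ c) : 3 ≤ ((hasse P).neighborSet y).ncard := by
  have hsub : {a, b, c} ⊆ (hasse P).neighborSet y := by
    rintro w (rfl | rfl | rfl)
    exacts [Or.inr ha, Or.inr hb, Or.inl hc]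
  refine le_of_eq_of_le ?_ (Set.ncard_le_ncard hsub)
  exact (Set.ncard_eq_three.2
    ⟨a, b, c, hab, (ha.lt.trans hc.lt).ne, (hb.lt.trans hc.lt).ne, rfl⟩).symm

theorem isMax_or_isMin_of_ncard_neighborSet_hasse_le_one {v : P}
    (hv : ((hasse P).neighborSet v).ncard ≤ 1) : IsMax v ∨ IsMin v := by
  by_contra! h
  obtain ⟨c, hvc, -⟩ := exists_covBy_le_of_lt (not_isMax_iff.1 h.1).choose_spec
  obtain ⟨w, -, hwv⟩ := exists_le_covBy_of_lt (not_isMin_iff.1 h.2).choose_spec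
  have := (Set.ncard_le_one_iff_subsingleton.1 hv) (Or.inl hvc) (Or.inr hwv)
  exact (hwv.lt.trans hvc.lt).ne this.symm

end Poset

section Pendant

variable {P : Type*} [PartialOrder P]

/-- `Ici x` is a chain meeting the rest of the Hasse diagram only at `x`. -/
structure IsPendantChain (x : P) : Prop where
  isChain : IsChain (· ≤ ·) (Set.Ici x)
  le_of_covBy : ∀ ⦃z w⦄, x < z → w ⋖ z → x ≤ w

/-- Cutting off `Ici x` along the edge `t ⋖ x` is the deletion we are after; the second upper
cover of `t` keeps maximal chains through `t` from ending at `t`. -/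
structure IsPrunableEdge (t x : P) : Prop where
  covBy : t ⋖ x
  isPendantChain : IsPendantChain x
  eq_of_covBy : ∀ ⦃w⦄, w ⋖ x → w = t
  exists_covBy_ne : ∃ t', t ⋖ t' ∧ t' ≠ x

def HasDeletableLeafInterval (P : Type*) [PartialOrder P] (k : ℕ) : Prop :=
  ∃ v : P, ((hasse P).neighborSet v).ncard = 1 ∧
    ∃ I : Set P, v ∈ I ∧ (∃ x y : P, x ≤ y ∧ I = Set.Icc x y) ∧
      I.ncard ≤ k - 1 ∧ (hasse ↥(Iᶜ)).IsTree ∧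
      ∀ D : Set ↥(Iᶜ), IsMaxChain (· ≤ ·) D → D.ncard = k

namespace IsPendantChain

theorem of_isMax {v : P} (hv : IsMax v) : IsPendantChain v where
  isChain _ ha _ hb _ := Or.inl ((hv ha).trans hb)
  le_of_covBy _ _ hvz _ := absurd (hv hvz.le) hvz.not_ge

theorem isChain_univ {x : P} (hx : IsPendantChain x) (hmin : IsMin x)
    (hconn : (hasse P).Preconnected) : IsChain (· ≤ ·) (Set.univ : Set P) := by
  have hclosed : ∀ ⦃a b⦄, x ≤ a → (hasse P).Adj a b → x ≤ b := by
    rintro a b hxa (hab | hba)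
    · exact hxa.trans hab.le
    · rcases hxa.eq_or_lt with rfl | hxa
      · exact absurd (hmin hba.le) hba.lt.not_ge
      · exact hx.le_of_covBy hxa hba
  have hle : ∀ b, x ≤ b := fun b => by
    have := (SimpleGraph.reachable_iff_reflTransGen x b).1 (hconn x b)
    induction this with
    | refl => exact le_rfl
    | tail _ hab ih => exact hclosed ih hab
  exact fun a _ b _ => hx.isChain (hle a) (hle b)

variable [Finite P]

theorem of_covBy {x t : P} (hx : IsPendantChain x) (ht : t ⋖ x) (hlow : ∀ ⦃w⦄, w ⋖ x → w = t)
    (hup : ∀ ⦃c⦄, t ⋖ c → c = x) : IsPendantChain t := by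
  have hxle : ∀ ⦃z⦄, t < z → x ≤ z := fun z hz => by
    obtain ⟨c, htc, hcz⟩ := exists_covBy_le_of_lt hz
    exact hup htc ▸ hcz
  refine ⟨fun a ha b hb hab => ?_, fun z w htz hwz => ?_⟩
  · rcases (Set.mem_Ici.1 ha).eq_or_lt with rfl | hta
    · exact Or.inl hb
    rcases (Set.mem_Ici.1 hb).eq_or_lt with rfl | htb
    · exact Or.inr ha
    exact hx.isChain (hxle hta) (hxle htb) hab
  · rcases (hxle htz).eq_or_lt with rfl | hxz
    · exact (hlow hwz).ge
    · exact ht.le.trans (hx.le_of_covBy hxz hwz)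

theorem exists_isPrunableEdge_or_branch (hconn : (hasse P).Preconnected) {v : P}
    (hv : ((hasse P).neighborSet v).ncard = 1) {x : P} (hxv : x ≤ v) (hx : IsPendantChain x) :
    (∃ t x : P, IsPrunableEdge t x) ∨ IsChain (· ≤ ·) (Set.univ : Set P) ∨
      ∃ y, y ≤ v ∧ IsChain (· ≤ ·) (Set.Ici y) ∧ 3 ≤ ((hasse P).neighborSet y).ncard := by
  induction x using WellFoundedLT.induction with
  | _ x ih =>
  by_cases htwo : ∃ a b, a ≠ b ∧ a ⋖ x ∧ b ⋖ x
  · obtain ⟨a, b, hab, ha, hb⟩ := htwo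
    refine Or.inr (Or.inr ⟨x, hxv, hx.isChain, ?_⟩)
    rcases hxv.eq_or_lt with rfl | hxv
    · exact absurd (Set.ncard_le_one_iff_subsingleton.1 hv.le (Or.inr ha) (Or.inr hb)) hab
    · obtain ⟨c, hc, -⟩ := exists_covBy_le_of_lt hxv
      exact three_le_ncard_neighborSet_hasse hab ha hb hc
  push Not at htwo
  by_cases hmin : IsMin x
  · exact Or.inr (Or.inl (hx.isChain_univ hmin hconn))
  obtain ⟨t, -, ht⟩ := exists_le_covBy_of_lt (not_isMin_iff.1 hmin).choose_spec
  have hlow : ∀ ⦃w⦄, w ⋖ x → w = t := fun w hw => by_contra fun hne => htwo w t hne hw ht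
  by_cases hsplit : ∃ t', t ⋖ t' ∧ t' ≠ x
  · exact Or.inl ⟨t, x, ht, hx, hlow, hsplit⟩
  push Not at hsplit
  exact ih t ht.lt (ht.le.trans hxv) (hx.of_covBy ht hlow hsplit)

end IsPendantChain

namespace IsPrunableEdge

variable {t x : P}

theorem eq_or_le_of_covBy (h : IsPrunableEdge t x) {z w : P} (hz : x ≤ z) (hw : w ⋖ z) :
    w = t ∨ x ≤ w := by
  rcases hz.eq_or_lt with rfl | hxz
  · exact Or.inl (h.eq_of_covBy hw)
  · exact Or.inr (h.isPendantChain.le_of_covBy hxz hw)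

theorem notMem_Ici (h : IsPrunableEdge t x) : t ∉ Set.Ici x :=
  h.covBy.lt.not_ge

theorem isChain_insert_Ici (h : IsPrunableEdge t x) : IsChain (· ≤ ·) (insert t (Set.Ici x)) :=
  h.isPendantChain.isChain.insert fun _ hb _ => Or.inl (h.covBy.le.trans hb)

theorem isTree_hasse_compl (h : IsPrunableEdge t x) (htree : (hasse P).IsTree) :
    (hasse ↥(Set.Ici x)ᶜ).IsTree := by
  rw [hasse_subtype_eq_induce (isUpperSet_Ici x).compl.ordConnected]
  refine htree.induce_compl h.notMem_Ici fun a c hac ha hc => ?_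
  rcases hac with hac | hca
  · exact (h.eq_or_le_of_covBy hc hac).resolve_right ha
  · exact absurd (Set.mem_Ici.2 (Set.mem_Ici.1 hc |>.trans hca.le)) ha

variable [Finite P]

theorem le_of_lt (h : IsPrunableEdge t x) {z d : P} (hz : x ≤ z) (hd : ¬x ≤ d) (hdz : d < z) :
    d ≤ t := by
  induction z using WellFoundedLT.induction with
  | _ z ih =>
  obtain ⟨w, hdw, hwz⟩ := exists_le_covBy_of_lt hdz
  rcases h.eq_or_le_of_covBy hz hwz with rfl | hxw
  · exact hdw
  · exact ih w hwz.lt hxw (hdw.lt_of_ne fun e => hd (e ▸ hxw))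

theorem ncard_neighborSet_eq_one (h : IsPrunableEdge t x) {v : P} (hv : IsMax v) (hxv : x ≤ v) :
    ((hasse P).neighborSet v).ncard = 1 := by
  have hnbr : (hasse P).neighborSet v = {w | w ⋖ v} := by
    rw [neighborSet_hasse, Set.union_eq_right.2]
    exact fun c hc => absurd (hv hc.le) hc.lt.not_ge
  have hmem : ∀ ⦃u⦄, u ⋖ v → u ∈ insert t (Set.Ici x) := fun _ hu => h.eq_or_le_of_covBy hxv hu
  obtain ⟨w, -, hw⟩ := exists_le_covBy_of_lt (h.covBy.lt.trans_le hxv)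
  refine Set.ncard_eq_one.2 ⟨w, hnbr ▸ Set.eq_singleton_iff_unique_mem.2 ⟨hw, fun u hu => ?_⟩⟩
  exact h.isChain_insert_Ici.covBy_unique_left (hmem hu) (hmem hw) hu hw

theorem isMaxChain_image_val (h : IsPrunableEdge t x) {D : Set ↥(Set.Ici x)ᶜ}
    (hD : IsMaxChain (· ≤ ·) D) : IsMaxChain (· ≤ ·) (Subtype.val '' D) := by
  refine hD.image_val fun e he hchain => ?_
  have hxe : x ≤ e := not_not.1 he
  have hle : ∀ d ∈ D, (d : P) ≤ t := fun d hd => by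
    have hne : (d : P) ≠ e := fun hde => d.2 (hde ▸ hxe)
    rcases hchain (Set.mem_insert_of_mem _ ⟨d, hd, rfl⟩) (Set.mem_insert e _) hne with hde | hed
    · exact h.le_of_lt hxe d.2 (hde.lt_of_ne hne)
    · exact absurd (hxe.trans hed) d.2
  obtain ⟨t', htt', ht'x⟩ := h.exists_covBy_ne
  have ht' : t' ∉ Set.Ici x := fun hxt' =>
    ht'x ((htt'.eq_or_eq h.covBy.le hxt').resolve_left h.covBy.ne').symm
  have ht'D : (⟨t', ht'⟩ : ↥(Set.Ici x)ᶜ) ∈ D :=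
    hD.mem_of_forall_le fun d hd => (hle d hd).trans htt'.le
  exact htt'.lt.not_ge (hle _ ht'D)

theorem ncard_Ici_lt (h : IsPrunableEdge t x) {k : ℕ}
    (hgraded : ∀ C : Set P, IsMaxChain (· ≤ ·) C → C.ncard = k) : (Set.Ici x).ncard < k := by
  obtain ⟨C, hC, hsub⟩ := h.isChain_insert_Ici.exists_maxChain
  calc (Set.Ici x).ncard < (insert t (Set.Ici x)).ncard := by
        rw [Set.ncard_insert_of_notMem h.notMem_Ici]; exact Nat.lt_succ_self _
    _ ≤ C.ncard := Set.ncard_le_ncard hsub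
    _ = k := hgraded C hC

theorem hasDeletableLeafInterval (h : IsPrunableEdge t x) {k : ℕ} (htree : (hasse P).IsTree)
    (hgraded : ∀ C : Set P, IsMaxChain (· ≤ ·) C → C.ncard = k) :
    HasDeletableLeafInterval P k := by
  obtain ⟨v, hxv, hv⟩ := Finite.exists_le_maximal (p := fun _ : P => True) trivial
  have hv : IsMax v := fun z hz => hv.2 trivial hz
  have hIcc : Set.Ici x = Set.Icc x v := Set.ext fun z =>
    ⟨fun hz => ⟨hz, le_of_isChain_Ici h.isPendantChain.isChain hv hxv hz⟩, And.left⟩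
  refine ⟨v, h.ncard_neighborSet_eq_one hv hxv, Set.Ici x, hxv, ⟨x, v, hxv, hIcc⟩,
    Nat.le_sub_one_of_lt (h.ncard_Ici_lt hgraded), h.isTree_hasse_compl htree, fun D hD => ?_⟩
  rw [← Set.ncard_image_of_injective D Subtype.val_injective]
  exact hgraded _ (h.isMaxChain_image_val hD)

end IsPrunableEdge

theorem HasDeletableLeafInterval.of_orderDual {k : ℕ} (h : HasDeletableLeafInterval Pᵒᵈ k) :
    HasDeletableLeafInterval P k := by
  obtain ⟨v, hv, I, hvI, ⟨x, y, hxy, hI⟩, hcard, htree, hgraded⟩ := h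
  have hhasse : hasse ↥(Iᶜ) = hasse (↥((OrderDual.toDual ⁻¹' I)ᶜ))ᵒᵈ := by
    ext a b
    exact Iff.rfl
  refine ⟨OrderDual.ofDual v, by rwa [← hasse_orderDual], OrderDual.toDual ⁻¹' I, hvI,
    ⟨OrderDual.ofDual y, OrderDual.ofDual x, hxy, ?_⟩, hcard, ?_, fun D hD => hgraded D hD.symm⟩
  · rw [hI]
    ext z
    exact and_comm
  · rwa [hhasse, hasse_orderDual] at htree

end Pendant

section Existence

variable {P : Type*} [PartialOrder P]

def IsChainEnd (v y : P) : Prop :=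
  (IsMax v ∧ y ≤ v ∧ IsChain (· ≤ ·) (Set.Ici y)) ∨
    (IsMin v ∧ v ≤ y ∧ IsChain (· ≤ ·) (Set.Iic y))

variable [Finite P]

theorem IsChainEnd.eq {v₁ v₂ y : P} (h₁ : IsChainEnd v₁ y) (h₂ : IsChainEnd v₂ y)
    (hy : 3 ≤ ((hasse P).neighborSet y).ncard) : v₁ = v₂ := by
  rcases h₁ with ⟨hm₁, hy₁, hc₁⟩ | ⟨hm₁, hy₁, hc₁⟩ <;>
    rcases h₂ with ⟨hm₂, hy₂, hc₂⟩ | ⟨hm₂, hy₂, hc₂⟩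
  · exact le_antisymm (le_of_isChain_Ici hc₂ hm₂ hy₂ hy₁) (le_of_isChain_Ici hc₁ hm₁ hy₁ hy₂)
  · exact absurd (ncard_neighborSet_hasse_le_two hc₁ hc₂) (by omega)
  · exact absurd (ncard_neighborSet_hasse_le_two hc₂ hc₁) (by omega)
  · exact le_antisymm (le_of_isChain_Ici (P := Pᵒᵈ) hc₁.symm hm₁.toDual hy₁ hy₂)
      (le_of_isChain_Ici (P := Pᵒᵈ) hc₂.symm hm₂.toDual hy₂ hy₁)

theorem exists_branch_of_isMax (hconn : (hasse P).Preconnected)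
    (hno : ∀ t x : P, ¬IsPrunableEdge t x) (hP : ¬IsChain (· ≤ ·) (Set.univ : Set P)) {v : P}
    (hmax : IsMax v) (hv : ((hasse P).neighborSet v).ncard = 1) :
    ∃ y, y ≤ v ∧ IsChain (· ≤ ·) (Set.Ici y) ∧ 3 ≤ ((hasse P).neighborSet y).ncard :=
  (((IsPendantChain.of_isMax hmax).exists_isPrunableEdge_or_branch hconn hv le_rfl).resolve_left
    fun ⟨t, x, h⟩ => hno t x h).resolve_left hP

theorem exists_isChainEnd_of_leaf (hconn : (hasse P).Preconnected)
    (hno : ∀ t x : P, ¬IsPrunableEdge t x) (hnoDual : ∀ t x : Pᵒᵈ, ¬IsPrunableEdge t x)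
    (hP : ¬IsChain (· ≤ ·) (Set.univ : Set P)) {v : P}
    (hv : ((hasse P).neighborSet v).ncard = 1) :
    ∃ y, IsChainEnd v y ∧ 3 ≤ ((hasse P).neighborSet y).ncard := by
  rcases isMax_or_isMin_of_ncard_neighborSet_hasse_le_one hv.le with hmax | hmin
  · obtain ⟨y, hyv, hy, h3⟩ := exists_branch_of_isMax hconn hno hP hmax hv
    exact ⟨y, Or.inl ⟨hmax, hyv, hy⟩, h3⟩
  · have hconnDual : (hasse Pᵒᵈ).Preconnected := by rwa [hasse_orderDual]
    obtain ⟨y, hyv, hy, h3⟩ := exists_branch_of_isMax hconnDual hnoDual (fun h => hP h.symm)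
      hmin.toDual (by rwa [hasse_orderDual])
    rw [hasse_orderDual] at h3
    exact ⟨OrderDual.ofDual y, Or.inr ⟨hmin, hyv, hy.symm⟩, h3⟩

/-- Otherwise every leaf is the end of a chain hanging from its own vertex of degree at least
three, which a tree does not allow. -/
theorem exists_isPrunableEdge (htree : (hasse P).IsTree)
    (hP : ¬IsChain (· ≤ ·) (Set.univ : Set P)) :
    (∃ t x : P, IsPrunableEdge t x) ∨ ∃ t x : Pᵒᵈ, IsPrunableEdge t x := by
  classical
  by_contra! hno
  have : Fintype P := Fintype.ofFinite P
  have : Nontrivial P := by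
    by_contra h
    rw [not_nontrivial_iff_subsingleton] at h
    exact hP fun a _ b _ hab => absurd (Subsingleton.elim a b) hab
  have hcount := htree.card_filter_three_le_degree_add_two_le
  simp only [← SimpleGraph.ncard_neighborSet_eq_degree] at hcount
  have hleaves : (Finset.univ.filter fun v => ((hasse P).neighborSet v).ncard = 1).card ≤
      (Finset.univ.filter fun y => 3 ≤ ((hasse P).neighborSet y).ncard).card := by
    refine Finset.card_le_card_of_forall_subsingleton IsChainEnd (fun v hv => ?_)
      fun y hy v₁ h₁ v₂ h₂ => h₁.2.eq h₂.2 (Finset.mem_filter.1 hy).2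
    obtain ⟨y, hvy, h3⟩ := exists_isChainEnd_of_leaf htree.connected.preconnected hno.1 hno.2 hP
      (Finset.mem_filter.1 hv).2
    exact ⟨y, Finset.mem_filter.2 ⟨Finset.mem_univ y, h3⟩, hvy⟩
  omega

end Existence

/-- Let `P` be a graded tree poset of height `k` (every maximal chain has exactly
`k` elements, the Hasse diagram is a tree) that is not a chain.  Then there is a
leaf `v` of the Hasse diagram and an interval `I ∋ v` with `|I| ≤ k - 1` such
that the Hasse diagram of the induced subposet `P \ I` is a tree and `P \ I` is
graded of height `k`. -/
theorem stmt12 {P : Type*} [PartialOrder P] [Fintype P] (k : ℕ)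
    (htree : (hasse P).IsTree)
    (hgraded : ∀ C : Set P, IsMaxChain (· ≤ ·) C → C.ncard = k)
    (hnotchain : ¬ IsChain (· ≤ ·) (Set.univ : Set P)) :
    ∃ v : P, ((hasse P).neighborSet v).ncard = 1 ∧
      ∃ I : Set P, v ∈ I ∧ (∃ x y : P, x ≤ y ∧ I = Set.Icc x y) ∧
        I.ncard ≤ k - 1 ∧
        (hasse ↥(Iᶜ)).IsTree ∧
        (∀ D : Set (↥(Iᶜ)), IsMaxChain (· ≤ ·) D → D.ncard = k) := by
  rcases exists_isPrunableEdge htree hnotchain with ⟨t, x, h⟩ | ⟨t, x, h⟩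
  · exact h.hasDeletableLeafInterval htree hgraded
  · refine (h.hasDeletableLeafInterval ?_ fun C hC => hgraded C hC.symm).of_orderDual
    rwa [hasse_orderDual]
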